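/- arXiv:1504.07880 — 5 statements merged into one kernel-verified Lean document; each statement's English description precedes it below -/
import Mathlib

section
/- Let (R, ⊕, ≤) be a lattice ordered monoid whose order is a complete lattice, let D = (V, A) be a finite digraph with arc resources (x_a)_{a∈A} in R, and fix a destination d ∈ V. Define the sequence (b^n)_{n≥0} in R^V by b^0_d = 0, b^0_v = ⊤ for v ≠ d, b^{n+1}_d = 0, and b^{n+1}_v = b^n_v ⊓ ⨅_{a=(v,u)∈δ⁺(v)} (x_a ⊕ b^n_u) for v ≠ d. Then every solution b ∈ R^V of the equation b_d = 0, b_v = b_v ⊓ ⨅_{a=(v,u)∈δ⁺(v)} (x_a ⊕ b_u) (v ≠ d) satisfies b_v ≤ b^n_v for every vertex v and every n ∈ ℕ; consequently, the greatest solution b† and the componentwise infimum b^∞_v := ⨅_{n∈ℕ} b^n_v satisfy b†_v ≤ b^∞_v ≤ b^n_v for all v and n. -/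
/-- A digraph with vertex set `V` and arc set `A`: each arc has a tail and a head. -/
structure Digraph' (V A : Type*) where
  tail : A → V
  head : A → V

/-- The sequence `(bⁿ)` of the generalized Ford-Bellman algorithm:
`b⁰ d = 0`, `b⁰ v = ⊤` for `v ≠ d`, `bⁿ⁺¹ d = 0`, and
`bⁿ⁺¹ v = bⁿ v ⊓ ⨅_{a ∈ δ⁺(v)} (x a + bⁿ (head a))` for `v ≠ d`. -/
def bSeq {V A R : Type*} [DecidableEq V] [CompleteLattice R] [AddMonoid R]
    (D : Digraph' V A) (x : A → R) (d : V) : ℕ → V → R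
  | 0 => fun v => if v = d then 0 else ⊤
  | n + 1 => fun v => if v = d then 0
      else bSeq D x d n v ⊓ ⨅ a ∈ {a : A | D.tail a = v}, (x a + bSeq D x d n (D.head a))

theorem le_bSeq_of_subsolution {V A R : Type*} [DecidableEq V] [CompleteLattice R] [AddMonoid R]
    [CovariantClass R R (· + ·) (· ≤ ·)] (D : Digraph' V A) (x : A → R) (d : V) {b : V → R}
    (hd : b d ≤ 0)
    (hv : ∀ v, v ≠ d → b v ≤ ⨅ a ∈ {a : A | D.tail a = v}, (x a + b (D.head a)))
    (n : ℕ) (v : V) : b v ≤ bSeq D x d n v := by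
  induction n generalizing v with
  | zero =>
    by_cases h : v = d
    · simpa [bSeq, h] using hd
    · simp [bSeq, h]
  | succ n ih =>
    by_cases h : v = d
    · simpa [bSeq, h] using hd
    · simp only [bSeq, h, if_false]
      refine le_inf (ih v) ((hv v h).trans (iInf₂_mono fun a _ => ?_))
      exact add_le_add_right (ih _) _

theorem stmt1_general {V A R : Type*} [DecidableEq V]
    [CompleteLattice R] [AddMonoid R]
    [CovariantClass R R (· + ·) (· ≤ ·)]
    (D : Digraph' V A) (x : A → R) (d : V) :
    (∀ b : V → R,
      (b d = 0 ∧ ∀ v, v ≠ d →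
        b v = b v ⊓ ⨅ a ∈ {a : A | D.tail a = v}, (x a + b (D.head a))) →
      ∀ (n : ℕ) (v : V), b v ≤ bSeq D x d n v) ∧
    (∀ bdag : V → R,
      IsGreatest {b : V → R | b d = 0 ∧ ∀ v, v ≠ d →
        b v = b v ⊓ ⨅ a ∈ {a : A | D.tail a = v}, (x a + b (D.head a))} bdag →
      ∀ (v : V) (n : ℕ),
        bdag v ≤ (⨅ m : ℕ, bSeq D x d m v) ∧ (⨅ m : ℕ, bSeq D x d m v) ≤ bSeq D x d n v) := by
  refine ⟨fun b hb => le_bSeq_of_subsolution D x d hb.1.le fun v h => left_eq_inf.mp (hb.2 v h),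
    fun bdag hg v n => ⟨le_iInf fun m => ?_, iInf_le _ n⟩⟩
  exact le_bSeq_of_subsolution D x d hg.1.1.le (fun u h => left_eq_inf.mp (hg.1.2 u h)) m v

/-- every solution `b` of the generalized dynamic programming equation
satisfies `b v ≤ bⁿ v` for all `v` and `n`; consequently the greatest solution `b†`
and `b^∞ v = ⨅ₙ bⁿ v` satisfy `b† v ≤ b^∞ v ≤ bⁿ v` for all `v` and `n`. -/
theorem stmt1 {V A R : Type*} [Fintype V] [Fintype A] [DecidableEq V]
    [CompleteLattice R] [AddMonoid R]
    [CovariantClass R R (· + ·) (· ≤ ·)]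
    [CovariantClass R R (Function.swap (· + ·)) (· ≤ ·)]
    (D : Digraph' V A) (x : A → R) (d : V) :
    (∀ b : V → R,
      (b d = 0 ∧ ∀ v, v ≠ d →
        b v = b v ⊓ ⨅ a ∈ {a : A | D.tail a = v}, (x a + b (D.head a))) →
      ∀ (n : ℕ) (v : V), b v ≤ bSeq D x d n v) ∧
    (∀ bdag : V → R,
      IsGreatest {b : V → R | b d = 0 ∧ ∀ v, v ≠ d →
        b v = b v ⊓ ⨅ a ∈ {a : A | D.tail a = v}, (x a + b (D.head a))} bdag →
      ∀ (v : V) (n : ℕ),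
        bdag v ≤ (⨅ m : ℕ, bSeq D x d m v) ∧ (⨅ m : ℕ, bSeq D x d m v) ≤ bSeq D x d n v) :=
  stmt1_general D x d
end

section
/- Let (R, ⊕, ≤) be a lattice ordered monoid, and let D = (V, A) be a finite digraph with arc resources (x_a)_{a∈A} in R such that x_C ≥ 0 for every cycle C of D. Then for every vertex v and every v-d path P there exists an elementary v-d path P' with x_{P'} ≤ x_P. -/
/-- `D.IsPathFrom v w l` : the list of arcs `l` is a path from `v` to `w` in `D`:
the tail of each arc is the head of the previous one (or `v` for the first arc),
and the head of the last arc is `w`; the empty list is the unique path from `v` to `v`. -/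
def Digraph'.IsPathFrom {V A : Type*} (D : Digraph' V A) : V → V → List A → Prop
  | v, w, [] => v = w
  | v, w, a :: l => D.tail a = v ∧ D.IsPathFrom (D.head a) w l

/-- The resource of a path `P = (a₁, …, a_k)` is `x_{a₁} + ⋯ + x_{a_k}` (and `0` for
the empty path). -/
def pathRes {A R : Type*} [AddMonoid R] (x : A → R) (l : List A) : R := (l.map x).sum

/-- A path starting at `v` is elementary if it visits each vertex at most once, i.e.,
the list of visited vertices `v, head a₁, …, head a_k` has no duplicate. -/
def Digraph'.IsElementary {V A : Type*} [DecidableEq V] (D : Digraph' V A)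
    (v : V) (l : List A) : Prop :=
  (v :: l.map D.head).Nodup

/-!
Induct on the path: the tail `t` of a path `a :: t` from `v` may be replaced by an
elementary path `t'` that is no more expensive. If `v` is not visited by `t'`, then `a :: t'` is
elementary; otherwise `t' = p ++ q` with `q` an elementary path from `v`, and `a :: p` is a cycle,
so `x_q ≤ (x_a + x_p) + x_q = x_a + x_{t'}` by nonnegativity of cycles.
-/

@[simp]
lemma pathRes_cons {A R : Type*} [AddMonoid R] (x : A → R) (a : A) (l : List A) :
    pathRes x (a :: l) = x a + pathRes x l := by
  simp [pathRes]

@[simp]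
lemma pathRes_append {A R : Type*} [AddMonoid R] (x : A → R) (l₁ l₂ : List A) :
    pathRes x (l₁ ++ l₂) = pathRes x l₁ + pathRes x l₂ := by
  simp [pathRes]

namespace Digraph'

variable {V A : Type*} {D : Digraph' V A}

lemma IsPathFrom.exists_append_of_mem [DecidableEq V] {w d v : V} {l : List A}
    (hl : D.IsPathFrom w d l) (he : D.IsElementary w l) (hv : v ∈ w :: l.map D.head) :
    ∃ p q, l = p ++ q ∧ D.IsPathFrom w v p ∧ D.IsPathFrom v d q ∧ D.IsElementary v q := by
  induction l generalizing w with
  | nil =>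
    obtain rfl : v = w := List.mem_singleton.mp hv
    exact ⟨[], [], rfl, rfl, hl, he⟩
  | cons a t ih =>
    obtain rfl | hv := List.mem_cons.mp hv
    · exact ⟨[], a :: t, rfl, rfl, hl, he⟩
    obtain ⟨p, q, rfl, hp, hq, hqe⟩ := ih hl.2 (List.nodup_cons.mp he).2 hv
    exact ⟨a :: p, q, rfl, ⟨hl.1, hp⟩, hq, hqe⟩

lemma IsPathFrom.exists_isElementary_pathRes_le [DecidableEq V] {R : Type*} [Preorder R]
    [AddMonoid R] [CovariantClass R R (· + ·) (· ≤ ·)]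
    [CovariantClass R R (Function.swap (· + ·)) (· ≤ ·)] {x : A → R}
    (hcyc : ∀ (u : V) (C : List A), C ≠ [] → D.IsPathFrom u u C → 0 ≤ pathRes x C)
    {v d : V} {l : List A} (hl : D.IsPathFrom v d l) :
    ∃ l', D.IsPathFrom v d l' ∧ D.IsElementary v l' ∧ pathRes x l' ≤ pathRes x l := by
  induction l generalizing v with
  | nil => exact ⟨[], hl, List.nodup_singleton v, le_rfl⟩
  | cons a t ih =>
    obtain ⟨rfl, ht⟩ := hl
    obtain ⟨t', ht', ht'e, ht'x⟩ := ih ht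
    have hcost : x a + pathRes x t' ≤ pathRes x (a :: t) := by
      rw [pathRes_cons]
      gcongr
    by_cases hv : D.tail a ∈ D.head a :: t'.map D.head
    · obtain ⟨p, q, rfl, hp, hq, hqe⟩ := ht'.exists_append_of_mem ht'e hv
      have hcycle : 0 ≤ x a + pathRes x p := by
        simpa using hcyc _ (a :: p) (List.cons_ne_nil a p) ⟨rfl, hp⟩
      refine ⟨q, hq, hqe, ?_⟩
      calc pathRes x q ≤ (x a + pathRes x p) + pathRes x q := le_add_of_nonneg_left hcycle
        _ = x a + pathRes x (p ++ q) := by rw [pathRes_append, add_assoc]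
        _ ≤ pathRes x (a :: t) := hcost
    · exact ⟨a :: t', ⟨rfl, ht'⟩, List.nodup_cons.mpr ⟨hv, ht'e⟩, hcost⟩

end Digraph'

theorem stmt4_general {V A R : Type*} [DecidableEq V]
    [Lattice R] [AddMonoid R]
    [CovariantClass R R (· + ·) (· ≤ ·)]
    [CovariantClass R R (Function.swap (· + ·)) (· ≤ ·)]
    (D : Digraph' V A) (x : A → R)
    (hcyc : ∀ (u : V) (C : List A), C ≠ [] → D.IsPathFrom u u C → 0 ≤ pathRes x C) :
    ∀ (v d : V) (l : List A), D.IsPathFrom v d l →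
      ∃ l' : List A, D.IsPathFrom v d l' ∧ D.IsElementary v l' ∧
        pathRes x l' ≤ pathRes x l :=
  fun _ _ _ hl => hl.exists_isElementary_pathRes_le hcyc

/-- in a lattice ordered monoid, if `x_C ≥ 0` for every cycle `C` of a
finite digraph `D`, then for every vertex `v` and every `v`-`d` path `P` there is an
elementary `v`-`d` path `P'` with `x_{P'} ≤ x_P`. -/
theorem stmt4 {V A R : Type*} [Fintype V] [Fintype A] [DecidableEq V]
    [Lattice R] [AddMonoid R]
    [CovariantClass R R (· + ·) (· ≤ ·)]
    [CovariantClass R R (Function.swap (· + ·)) (· ≤ ·)]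
    (D : Digraph' V A) (x : A → R)
    (hcyc : ∀ (u : V) (C : List A), C ≠ [] → D.IsPathFrom u u C → 0 ≤ pathRes x C) :
    ∀ (v d : V) (l : List A), D.IsPathFrom v d l →
      ∃ l' : List A, D.IsPathFrom v d l' ∧ D.IsElementary v l' ∧
        pathRes x l' ≤ pathRes x l :=
  stmt4_general D x hcyc
end

section
/- Let (R, ⊕, ≤) be a lattice ordered monoid whose order is a complete lattice, let D = (V, A) be a finite digraph with arc resources (x_a)_{a∈A} in R, fix a destination d ∈ V, and define the sequence (b^n)_{n≥0} in R^V by b^0_d = 0, b^0_v = ⊤ for v ≠ d, b^{n+1}_d = 0, and b^{n+1}_v = b^n_v ⊓ ⨅_{a=(v,u)∈δ⁺(v)} (x_a ⊕ b^n_u) for v ≠ d. Setting b^∞_v = ⨅_{n∈ℕ} b^n_v, one has for every vertex v ≠ d: ⨅_{a=(v,u)∈δ⁺(v)} (x_a ⊕ b^∞_u) ≤ b^∞_v. -/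
section bSeq

variable {V A R : Type*} [DecidableEq V] [CompleteLattice R] [AddMonoid R]
  {D : Digraph' V A} {x : A → R} {d v : V}

theorem bSeq_zero_of_ne (hv : v ≠ d) : bSeq D x d 0 v = ⊤ :=
  if_neg hv

theorem bSeq_succ_of_ne (n : ℕ) (hv : v ≠ d) :
    bSeq D x d (n + 1) v =
      bSeq D x d n v ⊓ ⨅ a ∈ {a : A | D.tail a = v}, (x a + bSeq D x d n (D.head a)) :=
  if_neg hv

end bSeq

theorem stmt7_general {V A R : Type*} [DecidableEq V]
    [CompleteLattice R] [AddMonoid R]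
    [CovariantClass R R (· + ·) (· ≤ ·)]
    (D : Digraph' V A) (x : A → R) (d : V) :
    ∀ v : V, v ≠ d →
      (⨅ a ∈ {a : A | D.tail a = v}, (x a + ⨅ n : ℕ, bSeq D x d n (D.head a))) ≤
        ⨅ n : ℕ, bSeq D x d n v := by
  intro v hv
  refine le_iInf fun n => ?_
  induction n with
  | zero => exact le_top.trans_eq (bSeq_zero_of_ne hv).symm
  | succ n ih =>
    rw [bSeq_succ_of_ne n hv]
    exact le_inf ih (iInf₂_mono fun a _ => add_le_add_right (iInf_le _ n) _)

/-- setting `b^∞ v = ⨅ₙ bⁿ v`, one has, for every vertex `v ≠ d`,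
`⨅_{a ∈ δ⁺(v)} (x a + b^∞ (head a)) ≤ b^∞ v`. -/
theorem stmt7 {V A R : Type*} [Fintype V] [Fintype A] [DecidableEq V]
    [CompleteLattice R] [AddMonoid R]
    [CovariantClass R R (· + ·) (· ≤ ·)]
    [CovariantClass R R (Function.swap (· + ·)) (· ≤ ·)]
    (D : Digraph' V A) (x : A → R) (d : V) :
    ∀ v : V, v ≠ d →
      (⨅ a ∈ {a : A | D.tail a = v}, (x a + ⨅ n : ℕ, bSeq D x d n (D.head a))) ≤
        ⨅ n : ℕ, bSeq D x d n v :=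
  stmt7_general D x d
end

section
/- Let (R, ⊕, ≤) be a lattice ordered monoid satisfying the weak Archimedean property: for all a, b ∈ R and all x ∈ R with x > 0, there exists n ∈ ℕ such that n·x ⊕ a ≰ b, where n·x denotes x ⊕ ⋯ ⊕ x (n times). Let D = (V, A) be a finite digraph with arc resources (x_a)_{a∈A} in R such that x_a > 0 for every arc a, fix an origin o ∈ V, and let (b_v)_{v∈V} be a family of elements of R with b_v ≥ 0 for every v. Then for every x_M ∈ R, the set of paths P in D with origin o satisfying x_P ⊕ b_v ≤ x_M, where v is the destination of P, is finite. -/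
/-- Sums of sublists of lists of nonnegative elements are smaller. -/
lemma sublist_sum_le_sum {R : Type*} [AddMonoid R] [Preorder R]
    [CovariantClass R R (· + ·) (· ≤ ·)]
    [CovariantClass R R (Function.swap (· + ·)) (· ≤ ·)]
    {l₁ l₂ : List R} (h : l₁.Sublist l₂) (hpos : ∀ r ∈ l₂, 0 ≤ r) :
    l₁.sum ≤ l₂.sum := by
  induction h with
  | slnil => exact le_rfl
  | @cons l₁' l₂' a h ih =>
      have h0 : 0 ≤ a := hpos a List.mem_cons_self
      have := ih (fun r hr => hpos r (List.mem_cons_of_mem a hr))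
      calc l₁'.sum ≤ l₂'.sum := this
        _ ≤ a + l₂'.sum := le_add_of_nonneg_left h0
        _ = (a :: l₂').sum := (List.sum_cons).symm
  | @cons_cons l₁' l₂' a h ih =>
      have := ih (fun r hr => hpos r (List.mem_cons_of_mem a hr))
      simpa using add_le_add_right this a

/-- in a lattice ordered monoid satisfying the weak Archimedean property,
if every arc resource is positive and `b v ≥ 0` for every vertex `v`, then for every
`x_M` the set of paths `P` with origin `o` satisfying `x_P + b v ≤ x_M` (where `v` is
the destination of `P`) is finite. -/
theorem stmt8 {V A R : Type*} [Fintype V] [Fintype A]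
    [Lattice R] [AddMonoid R]
    [CovariantClass R R (· + ·) (· ≤ ·)]
    [CovariantClass R R (Function.swap (· + ·)) (· ≤ ·)]
    (harch : ∀ a b xx : R, (0 ≤ xx ∧ xx ≠ 0) → ∃ n : ℕ, ¬ (n • xx + a ≤ b))
    (D : Digraph' V A) (x : A → R)
    (hpos : ∀ a : A, 0 ≤ x a ∧ x a ≠ 0)
    (o : V) (b : V → R) (hb : ∀ v : V, 0 ≤ b v) (xM : R) :
    {l : List A | ∃ v : V, D.IsPathFrom o v l ∧ pathRes x l + b v ≤ xM}.Finite := by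
  classical
  -- choose, for each arc, a bound on the number of occurrences
  choose n hn using fun a : A => harch 0 xM (x a) (hpos a)
  set N : ℕ := ∑ a : A, n a with hN
  apply (List.finite_length_le A N).subset
  rintro l ⟨v, -, hle⟩
  simp only [Set.mem_setOf_eq]
  -- each arc occurs fewer than `n a` times in `l`
  have hcount : ∀ a : A, l.count a ≤ n a := by
    intro a
    by_contra hc
    push_neg at hc
    have hsub : (List.replicate (n a) a).Sublist l :=
      List.replicate_sublist_iff.mpr hc.le
    have hsub' : ((List.replicate (n a) a).map x).Sublist (l.map x) := hsub.map x
    rw [List.map_replicate] at hsub'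
    have hsum : (List.replicate (n a) (x a)).sum ≤ pathRes x l := by
      apply sublist_sum_le_sum hsub'
      intro r hr
      obtain ⟨a', _, rfl⟩ := List.mem_map.mp hr
      exact (hpos a').1
    rw [List.sum_replicate] at hsum
    have : (n a) • x a + 0 ≤ xM := by
      rw [add_zero]
      calc (n a) • x a ≤ pathRes x l := hsum
        _ ≤ pathRes x l + b v := le_add_of_nonneg_right (hb v)
        _ ≤ xM := hle
    exact hn a this
  -- hence the length of `l` is at most `N`
  have hlen : l.length = Multiset.card (l : Multiset A) := by simp
  show l.length ≤ N
  rw [hlen, ← Multiset.toFinset_sum_count_eq]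
  calc ∑ a ∈ (l : Multiset A).toFinset, (l : Multiset A).count a
      ≤ ∑ a : A, (l : Multiset A).count a :=
        Finset.sum_le_sum_of_subset (Finset.subset_univ _)
    _ ≤ ∑ a : A, n a := Finset.sum_le_sum fun a _ => by
        simpa using hcount a
    _ = N := hN.symm
end

section
/- The usual stochastic order induces a lattice (meet-semilattice) structure on probability measures on ℝ: for any two probability measures μ, ν on ℝ with cumulative distribution functions F_μ and F_ν, there exists a probability measure η on ℝ whose cumulative distribution function is the pointwise maximum max(F_μ, F_ν); this η satisfies η ≤st μ and η ≤st ν, and every probability measure λ on ℝ with λ ≤st μ and λ ≤st ν satisfies λ ≤st η; that is, η is the greatest lower bound of μ and ν for the usual stochastic order. -/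
/-!
The pointwise maximum of two cumulative distribution functions is again monotone and
right-continuous, with limits `0` at `-∞` and `1` at `+∞`, so it is the cdf of the Stieltjes
probability measure it defines. Since `max` is the pointwise least upper bound, that measure is
the greatest lower bound for the stochastic order.
-/

open MeasureTheory ProbabilityTheory Filter Topology Set

namespace StieltjesFunction

variable {R : Type*} [LinearOrder R] [TopologicalSpace R]

instance : Max (StieltjesFunction R) where
  max f g :=
    { toFun := fun x => max (f x) (g x)
      mono' := f.mono.sup g.mono
      right_continuous' := fun x => (f.right_continuous x).max (g.right_continuous x) }

@[simp]
lemma sup_apply (f g : StieltjesFunction R) (x : R) : (f ⊔ g) x = max (f x) (g x) := rfl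

lemma tendsto_sup {f g : StieltjesFunction R} {l : Filter R} {a : ℝ}
    (hf : Tendsto f l (𝓝 a)) (hg : Tendsto g l (𝓝 a)) : Tendsto (f ⊔ g) l (𝓝 a) :=
  max_self a ▸ hf.max hg

end StieltjesFunction

namespace ProbabilityTheory

variable (μ ν : Measure ℝ)

noncomputable def stochasticMeet : Measure ℝ := (cdf μ ⊔ cdf ν).measure

lemma tendsto_cdf_sup_atBot : Tendsto (cdf μ ⊔ cdf ν) atBot (𝓝 0) :=
  StieltjesFunction.tendsto_sup (tendsto_cdf_atBot μ) (tendsto_cdf_atBot ν)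

instance : IsProbabilityMeasure (stochasticMeet μ ν) :=
  (cdf μ ⊔ cdf ν).isProbabilityMeasure (tendsto_cdf_sup_atBot μ ν)
    (StieltjesFunction.tendsto_sup (tendsto_cdf_atTop μ) (tendsto_cdf_atTop ν))

lemma stochasticMeet_Iic [IsProbabilityMeasure μ] [IsProbabilityMeasure ν] (t : ℝ) :
    stochasticMeet μ ν (Iic t) = max (μ (Iic t)) (ν (Iic t)) := by
  rw [stochasticMeet, StieltjesFunction.measure_Iic _ (tendsto_cdf_sup_atBot μ ν), sub_zero,
    StieltjesFunction.sup_apply, ENNReal.ofReal_max, ofReal_cdf, ofReal_cdf]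

end ProbabilityTheory

/-- the usual stochastic order induces a meet-semilattice structure on
probability measures on `ℝ`: for any probability measures `μ, ν` there is a
probability measure `η` whose cumulative distribution function is the pointwise
maximum `max (F_μ) (F_ν)`; it satisfies `η ≤st μ`, `η ≤st ν`, and every probability
measure `λ` with `λ ≤st μ` and `λ ≤st ν` satisfies `λ ≤st η` — i.e. `η` is the
greatest lower bound of `μ` and `ν` for the usual stochastic order (where
`α ≤st β` iff `α (Iic t) ≥ β (Iic t)` for all `t`). -/
theorem stmt13 (μ ν : Measure ℝ) [IsProbabilityMeasure μ] [IsProbabilityMeasure ν] :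
    ∃ η : Measure ℝ, IsProbabilityMeasure η ∧
      (∀ t : ℝ, η (Set.Iic t) = max (μ (Set.Iic t)) (ν (Set.Iic t))) ∧
      (∀ t : ℝ, μ (Set.Iic t) ≤ η (Set.Iic t)) ∧
      (∀ t : ℝ, ν (Set.Iic t) ≤ η (Set.Iic t)) ∧
      ∀ lam : Measure ℝ, IsProbabilityMeasure lam →
        (∀ t : ℝ, μ (Set.Iic t) ≤ lam (Set.Iic t)) →
        (∀ t : ℝ, ν (Set.Iic t) ≤ lam (Set.Iic t)) →
        ∀ t : ℝ, η (Set.Iic t) ≤ lam (Set.Iic t) := by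
  refine ⟨stochasticMeet μ ν, inferInstance, stochasticMeet_Iic μ ν, fun t => ?_, fun t => ?_,
    fun lam _ hμ hν t => ?_⟩ <;> rw [stochasticMeet_Iic]
  · exact le_max_left _ _
  · exact le_max_right _ _
  · exact max_le (hμ t) (hν t)
end
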